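/- Let m ≥ 1 and let Ω ⊆ ℝ^{2m} be a nonempty open set with coordinates (u₁,…,u_m,v₁,…,v_m), and let f, g : Ω → ℝ be smooth functions such that ∂f/∂u_i ≠ ∂g/∂v_i on Ω for every 1 ≤ i ≤ m. Suppose there exist functions a^{ij}, b^{ij} (1 ≤ i < j ≤ m) and p^i, q^i (1 ≤ i ≤ m) on Ω satisfying Hess f = Σ_{i<j} a^{ij} G_{ij} + Σ_i p^i S_i and Hess g = Σ_{i<j} b^{ij} G_{ij} + Σ_i q^i S_i, with G_{ij} and S_i as in the context. Write f_{u_i} = ∂f/∂u_i etc. Then for all i and all j ≠ i the following second-order equations hold on Ω: f_{u_i u_i} = (2 g_{u_i}/(g_{v_i} − f_{u_i}))·f_{u_i v_i}; f_{v_i v_i} = (2 f_{v_i}/(f_{u_i} − g_{v_i}))·f_{u_i v_i}; f_{u_i u_j} = (g_{u_j}/(g_{v_i} − f_{u_i}))·f_{u_i v_i} + (g_{u_i}/(g_{v_j} − f_{u_j}))·f_{u_j v_j}; f_{v_i v_j} = (f_{v_j}/(f_{u_i} − g_{v_i}))·f_{u_i v_i} + (f_{v_i}/(f_{u_j} − g_{v_j}))·f_{u_j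 v_j}; f_{u_i v_j} + f_{u_j v_i} = ((f_{u_j} − g_{v_j})/(f_{u_i} − g_{v_i}))·f_{u_i v_i} + ((f_{u_i} − g_{v_i})/(f_{u_j} − g_{v_j}))·f_{u_j v_j}; together with the analogous equations for g obtained by simultaneously exchanging f ↔ g and u ↔ v. -/
import Mathlib


/-- Index in `Fin (2*m)` of the coordinate `u_i`. -/
def uIdx (m : ℕ) (i : Fin m) : Fin (2 * m) := ⟨i, by omega⟩

/-- Index in `Fin (2*m)` of the coordinate `v_i`. -/
def vIdx (m : ℕ) (i : Fin m) : Fin (2 * m) := ⟨m + i, by omega⟩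

/-- The standard basis vector `ε_i` of `ℝ^{2m}` (the `u_i` direction). -/
def eps (m : ℕ) (i : Fin m) : Fin (2 * m) → ℝ := Pi.single (uIdx m i) 1

/-- The standard basis vector `δ_i` of `ℝ^{2m}` (the `v_i` direction). -/
def del (m : ℕ) (i : Fin m) : Fin (2 * m) → ℝ := Pi.single (vIdx m i) 1

/-- The gradient of `f : ℝ^{2m} → ℝ` at `x`. -/
noncomputable def grad (m : ℕ) (f : (Fin (2 * m) → ℝ) → ℝ) (x : Fin (2 * m) → ℝ) :
    Fin (2 * m) → ℝ :=
  fun j => fderiv ℝ f x (Pi.single j 1)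

/-- The Hessian matrix of `f : ℝ^{2m} → ℝ` at `x`. -/
noncomputable def hess (m : ℕ) (f : (Fin (2 * m) → ℝ) → ℝ) (x : Fin (2 * m) → ℝ) :
    Matrix (Fin (2 * m)) (Fin (2 * m)) ℝ :=
  Matrix.of fun i j => fderiv ℝ (fun y => fderiv ℝ f y (Pi.single j 1)) x (Pi.single i 1)

/-- `G_{ij} = ε_i δ_jᵀ + δ_j ε_iᵀ - ε_j δ_iᵀ - δ_i ε_jᵀ`. -/
noncomputable def Gmat (m : ℕ) (i j : Fin m) : Matrix (Fin (2 * m)) (Fin (2 * m)) ℝ :=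
  Matrix.vecMulVec (eps m i) (del m j) + Matrix.vecMulVec (del m j) (eps m i)
    - Matrix.vecMulVec (eps m j) (del m i) - Matrix.vecMulVec (del m i) (eps m j)

/-- `S_i = (∇f) δ_iᵀ + δ_i (∇f)ᵀ - (∇g) ε_iᵀ - ε_i (∇g)ᵀ`. -/
noncomputable def Smat (m : ℕ) (f g : (Fin (2 * m) → ℝ) → ℝ) (i : Fin m)
    (x : Fin (2 * m) → ℝ) : Matrix (Fin (2 * m)) (Fin (2 * m)) ℝ :=
  Matrix.vecMulVec (grad m f x) (del m i) + Matrix.vecMulVec (del m i) (grad m f x)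
    - Matrix.vecMulVec (grad m g x) (eps m i) - Matrix.vecMulVec (eps m i) (grad m g x)

/-- The `2×2` matrix `J_i` with rows `(f_{u_i}, f_{v_i})` and `(g_{u_i}, g_{v_i})`. -/
noncomputable def Jmat (m : ℕ) (f g : (Fin (2 * m) → ℝ) → ℝ) (i : Fin m)
    (x : Fin (2 * m) → ℝ) : Matrix (Fin 2) (Fin 2) ℝ :=
  !![fderiv ℝ f x (eps m i), fderiv ℝ f x (del m i);
     fderiv ℝ g x (eps m i), fderiv ℝ g x (del m i)]

/-- The quadratic form `Q(p₁,…,p_{m+1}) = det(p_{m+1}·I₂ - ∑ p_i·J_i)`; here `p_i` for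
`1 ≤ i ≤ m` is `p i.castSucc` and `p_{m+1}` is `p (Fin.last m)`. -/
noncomputable def Qform (m : ℕ) (f g : (Fin (2 * m) → ℝ) → ℝ) (x : Fin (2 * m) → ℝ)
    (p : Fin (m + 1) → ℝ) : ℝ :=
  (p (Fin.last m) • (1 : Matrix (Fin 2) (Fin 2) ℝ)
    - ∑ i : Fin m, p i.castSucc • Jmat m f g i x).det

/-- The symmetric matrix of the quadratic form `Qform`, obtained by polarization. -/
noncomputable def Qmat (m : ℕ) (f g : (Fin (2 * m) → ℝ) → ℝ) (x : Fin (2 * m) → ℝ) :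
    Matrix (Fin (m + 1)) (Fin (m + 1)) ℝ :=
  Matrix.of fun a b =>
    (Qform m f g x (Pi.single a 1 + Pi.single b 1) - Qform m f g x (Pi.single a 1)
      - Qform m f g x (Pi.single b 1)) / 2

/-- Index pairs `i < j`. -/
abbrev IdxPair (m : ℕ) := { p : Fin m × Fin m // p.1 < p.2 }

/-- Coefficient vector for a linear combination of the functions
`1`, `u_i`, `v_i`, `f`, `g`, `u_i v_j - u_j v_i` (`i < j`), `v_i f - u_i g`. -/
abbrev Coeff (m : ℕ) :=
  ℝ × (Fin m → ℝ) × (Fin m → ℝ) × ℝ × ℝ × (IdxPair m → ℝ) × (Fin m → ℝ)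

/-- The linear combination of `1`, `u_i`, `v_i`, `f`, `g`, `u_i v_j - u_j v_i` (`i < j`),
`v_i f - u_i g` with coefficient vector `c`, evaluated at `x`. -/
noncomputable def evalCoeff (m : ℕ) (f g : (Fin (2 * m) → ℝ) → ℝ) (c : Coeff m)
    (x : Fin (2 * m) → ℝ) : ℝ :=
  c.1 + (∑ i, c.2.1 i * x (uIdx m i)) + (∑ i, c.2.2.1 i * x (vIdx m i))
    + c.2.2.2.1 * f x + c.2.2.2.2.1 * g x
    + (∑ pr : IdxPair m, c.2.2.2.2.2.1 pr *
        (x (uIdx m pr.1.1) * x (vIdx m pr.1.2) - x (uIdx m pr.1.2) * x (vIdx m pr.1.1)))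
    + (∑ i, c.2.2.2.2.2.2 i * (x (vIdx m i) * f x - x (uIdx m i) * g x))

/-- The partial derivative `f_{u_i}`. -/
noncomputable def pu (m : ℕ) (f : (Fin (2 * m) → ℝ) → ℝ) (i : Fin m) (x : Fin (2 * m) → ℝ) : ℝ :=
  fderiv ℝ f x (eps m i)

/-- The partial derivative `f_{v_i}`. -/
noncomputable def pv (m : ℕ) (f : (Fin (2 * m) → ℝ) → ℝ) (i : Fin m) (x : Fin (2 * m) → ℝ) : ℝ :=
  fderiv ℝ f x (del m i)


lemma uIdx_eq_uIdx {m : ℕ} {i k : Fin m} : uIdx m i = uIdx m k ↔ i = k := by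
  simp [uIdx, Fin.ext_iff]

lemma vIdx_eq_vIdx {m : ℕ} {i k : Fin m} : vIdx m i = vIdx m k ↔ i = k := by
  simp [vIdx, Fin.ext_iff]

lemma uIdx_ne_vIdx {m : ℕ} {i k : Fin m} : uIdx m i ≠ vIdx m k := by
  simp [uIdx, vIdx, Fin.ext_iff]; omega

lemma vIdx_ne_uIdx {m : ℕ} {i k : Fin m} : vIdx m i ≠ uIdx m k := by
  simp [uIdx, vIdx, Fin.ext_iff]; omega

lemma eps_u {m : ℕ} (i k : Fin m) : eps m k (uIdx m i) = if i = k then 1 else 0 := by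
  simp [eps, Pi.single_apply, uIdx_eq_uIdx]

lemma eps_v {m : ℕ} (i k : Fin m) : eps m k (vIdx m i) = 0 := by
  simp [eps, Pi.single_apply, vIdx_ne_uIdx]

lemma del_u {m : ℕ} (i k : Fin m) : del m k (uIdx m i) = 0 := by
  simp [del, Pi.single_apply, uIdx_ne_vIdx]

lemma del_v {m : ℕ} (i k : Fin m) : del m k (vIdx m i) = if i = k then 1 else 0 := by
  simp [del, Pi.single_apply, vIdx_eq_vIdx]

lemma grad_u {m : ℕ} (f : (Fin (2 * m) → ℝ) → ℝ) (x) (i : Fin m) :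
    grad m f x (uIdx m i) = pu m f i x := rfl

lemma grad_v {m : ℕ} (f : (Fin (2 * m) → ℝ) → ℝ) (x) (i : Fin m) :
    grad m f x (vIdx m i) = pv m f i x := rfl

lemma hessEntries (m : ℕ) (h f g : (Fin (2 * m) → ℝ) → ℝ) (x : Fin (2 * m) → ℝ)
    (A : IdxPair m → ℝ) (P : Fin m → ℝ)
    (H : hess m h x = (∑ pr : IdxPair m, A pr • Gmat m pr.1.1 pr.1.2)
          + ∑ i, P i • Smat m f g i x) :
    (∀ i j, hess m h x (uIdx m i) (uIdx m j) = -(P j * pu m g i x) - P i * pu m g j x) ∧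
    (∀ i j, hess m h x (vIdx m i) (vIdx m j) = P j * pv m f i x + P i * pv m f j x) ∧
    (∀ i, hess m h x (uIdx m i) (vIdx m i) = P i * (pu m f i x - pv m g i x)) ∧
    (∀ i, hess m h x (vIdx m i) (uIdx m i) = P i * (pu m f i x - pv m g i x)) ∧
    (∀ i j, hess m h x (uIdx m i) (vIdx m j) + hess m h x (uIdx m j) (vIdx m i)
        = P j * (pu m f i x - pv m g i x) + P i * (pu m f j x - pv m g j x)) ∧
    (∀ i j, hess m h x (vIdx m i) (uIdx m j) + hess m h x (vIdx m j) (uIdx m i)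
        = P j * (pu m f i x - pv m g i x) + P i * (pu m f j x - pv m g j x)) := by
  refine ⟨fun i j => ?_, fun i j => ?_, fun i => ?_, fun i => ?_, fun i j => ?_, fun i j => ?_⟩ <;>
  · rw [H]
    simp only [Matrix.add_apply, Matrix.sum_apply, Matrix.smul_apply, smul_eq_mul,
      Gmat, Smat, Matrix.sub_apply, Matrix.vecMulVec_apply,
      eps_u, eps_v, del_u, del_v, grad_u, grad_v, mul_ite, ite_mul, mul_zero, zero_mul,
      mul_one, one_mul, sub_zero, zero_sub, add_zero, zero_add, mul_neg]
    simp [Finset.sum_add_distrib, Finset.sum_sub_distrib, mul_ite, mul_zero, mul_add,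
      mul_sub, mul_neg, Finset.sum_ite_eq, Finset.sum_neg_distrib, sub_eq_add_neg, neg_add,
      ← ite_and, and_comm]
    try ring
theorem stmt18 (m : ℕ) (hm : 1 ≤ m) (Ω : Set (Fin (2 * m) → ℝ))
    (hΩo : IsOpen Ω) (hΩne : Ω.Nonempty)
    (f g : (Fin (2 * m) → ℝ) → ℝ)
    (hf : ContDiffOn ℝ (⊤ : ℕ∞) f Ω) (hg : ContDiffOn ℝ (⊤ : ℕ∞) g Ω)
    (hnd : ∀ (i : Fin m), ∀ x ∈ Ω, pu m f i x ≠ pv m g i x)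
    (a b : IdxPair m → (Fin (2 * m) → ℝ) → ℝ) (p q : Fin m → (Fin (2 * m) → ℝ) → ℝ)
    (heqf : ∀ x ∈ Ω, hess m f x
        = (∑ pr : IdxPair m, a pr x • Gmat m pr.1.1 pr.1.2) + ∑ i, p i x • Smat m f g i x)
    (heqg : ∀ x ∈ Ω, hess m g x
        = (∑ pr : IdxPair m, b pr x • Gmat m pr.1.1 pr.1.2) + ∑ i, q i x • Smat m f g i x) :
    ∀ x ∈ Ω,
      (∀ i : Fin m,
        hess m f x (uIdx m i) (uIdx m i)
          = 2 * pu m g i x / (pv m g i x - pu m f i x) * hess m f x (uIdx m i) (vIdx m i) ∧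
        hess m f x (vIdx m i) (vIdx m i)
          = 2 * pv m f i x / (pu m f i x - pv m g i x) * hess m f x (uIdx m i) (vIdx m i) ∧
        hess m g x (vIdx m i) (vIdx m i)
          = 2 * pv m f i x / (pu m f i x - pv m g i x) * hess m g x (vIdx m i) (uIdx m i) ∧
        hess m g x (uIdx m i) (uIdx m i)
          = 2 * pu m g i x / (pv m g i x - pu m f i x) * hess m g x (vIdx m i) (uIdx m i)) ∧
      (∀ i j : Fin m, i ≠ j →
        hess m f x (uIdx m i) (uIdx m j)
          = pu m g j x / (pv m g i x - pu m f i x) * hess m f x (uIdx m i) (vIdx m i)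
            + pu m g i x / (pv m g j x - pu m f j x) * hess m f x (uIdx m j) (vIdx m j) ∧
        hess m f x (vIdx m i) (vIdx m j)
          = pv m f j x / (pu m f i x - pv m g i x) * hess m f x (uIdx m i) (vIdx m i)
            + pv m f i x / (pu m f j x - pv m g j x) * hess m f x (uIdx m j) (vIdx m j) ∧
        hess m f x (uIdx m i) (vIdx m j) + hess m f x (uIdx m j) (vIdx m i)
          = (pu m f j x - pv m g j x) / (pu m f i x - pv m g i x)
              * hess m f x (uIdx m i) (vIdx m i)
            + (pu m f i x - pv m g i x) / (pu m f j x - pv m g j x)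
              * hess m f x (uIdx m j) (vIdx m j) ∧
        hess m g x (vIdx m i) (vIdx m j)
          = pv m f j x / (pu m f i x - pv m g i x) * hess m g x (vIdx m i) (uIdx m i)
            + pv m f i x / (pu m f j x - pv m g j x) * hess m g x (vIdx m j) (uIdx m j) ∧
        hess m g x (uIdx m i) (uIdx m j)
          = pu m g j x / (pv m g i x - pu m f i x) * hess m g x (vIdx m i) (uIdx m i)
            + pu m g i x / (pv m g j x - pu m f j x) * hess m g x (vIdx m j) (uIdx m j) ∧
        hess m g x (vIdx m i) (uIdx m j) + hess m g x (vIdx m j) (uIdx m i)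
          = (pv m g j x - pu m f j x) / (pv m g i x - pu m f i x)
              * hess m g x (vIdx m i) (uIdx m i)
            + (pv m g i x - pu m f i x) / (pv m g j x - pu m f j x)
              * hess m g x (vIdx m j) (uIdx m j)) := by
  intro x hx
  obtain ⟨fuu, fvv, fuv, fvu, fuvs, fvus⟩ :=
    hessEntries m f f g x (fun pr => a pr x) (fun i => p i x) (heqf x hx)
  obtain ⟨guu, gvv, guv, gvu, guvs, gvus⟩ :=
    hessEntries m g f g x (fun pr => b pr x) (fun i => q i x) (heqg x hx)
  refine ⟨fun i => ?_, fun i j hij => ?_⟩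
  · have h1 := hnd i x hx
    have d1 : pu m f i x - pv m g i x ≠ 0 := sub_ne_zero.2 h1
    have d1' : pv m g i x - pu m f i x ≠ 0 := sub_ne_zero.2 (Ne.symm h1)
    refine ⟨?_, ?_, ?_, ?_⟩
    · rw [fuu i i, fuv i]; field_simp; ring
    · rw [fvv i i, fuv i]; field_simp; ring
    · rw [gvv i i, gvu i]; field_simp; ring
    · rw [guu i i, gvu i]; field_simp; ring
  · have h1 := hnd i x hx
    have h2 := hnd j x hx
    have d1 : pu m f i x - pv m g i x ≠ 0 := sub_ne_zero.2 h1
    have d1' : pv m g i x - pu m f i x ≠ 0 := sub_ne_zero.2 (Ne.symm h1)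
    have d2 : pu m f j x - pv m g j x ≠ 0 := sub_ne_zero.2 h2
    have d2' : pv m g j x - pu m f j x ≠ 0 := sub_ne_zero.2 (Ne.symm h2)
    refine ⟨?_, ?_, ?_, ?_, ?_, ?_⟩
    · rw [fuu i j, fuv i, fuv j]; field_simp; ring
    · rw [fvv i j, fuv i, fuv j]; field_simp; ring
    · rw [fuvs i j, fuv i, fuv j]; field_simp; ring
    · rw [gvv i j, gvu i, gvu j]; field_simp; ring
    · rw [guu i j, gvu i, gvu j]; field_simp; ring
    · rw [gvus i j, gvu i, gvu j]; field_simp; ring
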